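/- arXiv:2305.05826 — 2 statements merged into one kernel-verified Lean document; each statement's English description precedes it below -/
import Mathlib

section
/- There is an absolute constant c > 0 such that the following holds for every n and every ε with 1/√n ≤ ε < 1/4. For every set S ⊆ [n]×[n] with |S| ≤ c·n/ε², letting 𝐒 ∈ {0,1}^{n×n} be the indicator matrix of S (𝐒_{ij} = 1 iff (i,j) ∈ S) and 𝟏 the n×n all-ones matrix, there is no real number σ̃ satisfying both |σ₁(𝟏) − σ̃| ≤ ε·max(n, ‖𝟏‖₁) and |σ₁(𝐒) − σ̃| ≤ ε·max(n, ‖𝐒‖₁). (This is the hard-instance pair underlying the Ω(n/ε²) lower bound for adaptive deterministic spectral norm approximation.) -/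
open Matrix BigOperators

/-- The spectral (operator) norm of a real square matrix. -/
noncomputable def specNorm {m : ℕ} (M : Matrix (Fin m) (Fin m) ℝ) : ℝ :=
  ‖LinearMap.toContinuousLinearMap (Matrix.toEuclideanLin M)‖

/-- The `n × n` all-ones matrix. -/
def allOnes (m : ℕ) : Matrix (Fin m) (Fin m) ℝ := Matrix.of fun _ _ => 1

/-- Euclidean norm of a vector in `ℝⁿ`. -/
noncomputable def vnorm {m : ℕ} (x : Fin m → ℝ) : ℝ := Real.sqrt (∑ i, (x i) ^ 2)

/-- The (unsorted) singular values of a real square matrix: square roots of the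
eigenvalues of `Aᵀ A`. -/
noncomputable def svRaw {m : ℕ} (A : Matrix (Fin m) (Fin m) ℝ) : Fin m → ℝ :=
  fun j => Real.sqrt ((Matrix.isHermitian_conjTranspose_mul_self A).eigenvalues j)

/-- `sval A i` is the `i`-th largest singular value of `A` (1-based indexing);
it is `0` for `i = 0` and for `i > m`. -/
noncomputable def sval {m : ℕ} (A : Matrix (Fin m) (Fin m) ℝ) (i : ℕ) : ℝ :=
  if h : 1 ≤ i ∧ i ≤ m then (svRaw A ∘ Tuple.sort (svRaw A)) ⟨m - i, by omega⟩ else 0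

/-- The nuclear (Schatten-1) norm of a real square matrix: the sum of its singular values. -/
noncomputable def nuclearNorm {m : ℕ} (A : Matrix (Fin m) (Fin m) ℝ) : ℝ :=
  ∑ j, svRaw A j

/-- The smallest eigenvalue of a symmetric real matrix, via the Rayleigh quotient. -/
noncomputable def lamMin {m : ℕ} (A : Matrix (Fin m) (Fin m) ℝ) : ℝ :=
  sInf {r : ℝ | ∃ x : Fin m → ℝ, vnorm x = 1 ∧ r = x ⬝ᵥ (A *ᵥ x)}

/-! Since `𝟏ᵀ𝟏 = n𝟏`, the eigenvalues of `𝟏ᵀ𝟏` lie in `{0, n²}` and sum to `n²`, so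
`σ₁(𝟏) = ‖𝟏‖₁ = n` and any admissible `σ̃` is at least `(1 - ε) n > 3n/4`. For the indicator
`𝐒`, `σ₁(𝐒)² ≤ ‖𝐒‖_F² = |S|` and, by Cauchy–Schwarz, `‖𝐒‖₁² ≤ n |S|`; with
`|S| ≤ n / (16 ε²) ≤ n² / 16` both `σ₁(𝐒)` and `ε · max(n, ‖𝐒‖₁)` are at most `n/4`, which forces
`σ̃ ≤ n/2`. -/

section Spectral

variable {ι : Type*} [Fintype ι]

lemma trace_conjTranspose_mul_self_eq_sum_sq (A : Matrix ι ι ℝ) :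
    (Aᴴ * A).trace = ∑ p : ι × ι, A p.1 p.2 ^ 2 := by
  rw [← star_vec_dotProduct_vec, dotProduct, ← Equiv.prodComm ι ι |>.sum_comp]
  simp [vec, sq]

variable [DecidableEq ι]

lemma sum_sq_indicator (S : Finset (ι × ι)) :
    ∑ p : ι × ι, (of fun i j => if (i, j) ∈ S then (1 : ℝ) else 0) p.1 p.2 ^ 2 = S.card := by
  simp [ite_pow]

lemma eigenvalues_eq_zero_or_eq_of_mul_self_eq_smul {M : Matrix ι ι ℝ} (hM : M.IsHermitian)
    {c : ℝ} (h : M * M = c • M) (j : ι) : hM.eigenvalues j = 0 ∨ hM.eigenvalues j = c := by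
  set v : ι → ℝ := ⇑(hM.eigenvectorBasis j)
  have hv : v ≠ 0 := (WithLp.ofLp_eq_zero 2).ne.2 <| hM.eigenvectorBasis.orthonormal.ne_zero j
  have hMv : M *ᵥ v = hM.eigenvalues j • v := hM.mulVec_eigenvectorBasis j
  have key : (hM.eigenvalues j * hM.eigenvalues j) • v = (c * hM.eigenvalues j) • v := by
    calc (hM.eigenvalues j * hM.eigenvalues j) • v = M *ᵥ (M *ᵥ v) := by
          rw [hMv, mulVec_smul, hMv, smul_smul]
      _ = (c * hM.eigenvalues j) • v := by
          rw [mulVec_mulVec, h, smul_mulVec, hMv, smul_smul]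
  rcases mul_eq_mul_right_iff.mp (smul_left_injective ℝ hv key) with h | h
  · exact Or.inr h
  · exact Or.inl h

end Spectral

section SingularValues

variable {m : ℕ}

lemma sq_svRaw (A : Matrix (Fin m) (Fin m) ℝ) (j : Fin m) :
    svRaw A j ^ 2 = (isHermitian_conjTranspose_mul_self A).eigenvalues j :=
  Real.sq_sqrt (eigenvalues_conjTranspose_mul_self_nonneg A j)

lemma sum_sq_svRaw (A : Matrix (Fin m) (Fin m) ℝ) :
    ∑ j, svRaw A j ^ 2 = ∑ p : Fin m × Fin m, A p.1 p.2 ^ 2 := by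
  simp_rw [sq_svRaw, ← trace_conjTranspose_mul_self_eq_sum_sq]
  exact_mod_cast ((isHermitian_conjTranspose_mul_self A).trace_eq_sum_eigenvalues).symm

lemma svRaw_le_sval_one (hm : 1 ≤ m) (A : Matrix (Fin m) (Fin m) ℝ) (j : Fin m) :
    svRaw A j ≤ sval A 1 := by
  rw [sval, dif_pos ⟨le_rfl, hm⟩, ← Tuple.sort (svRaw A) |>.apply_symm_apply j]
  exact Tuple.monotone_sort (svRaw A) (Fin.le_def.2 (by simp only; omega))

lemma sval_one_sq_le_sum_sq (A : Matrix (Fin m) (Fin m) ℝ) :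
    sval A 1 ^ 2 ≤ ∑ p : Fin m × Fin m, A p.1 p.2 ^ 2 := by
  rw [sval, ← sum_sq_svRaw]
  split_ifs
  · exact Finset.single_le_sum (f := fun j => svRaw A j ^ 2) (fun _ _ => sq_nonneg _)
      (Finset.mem_univ _)
  · rw [zero_pow two_ne_zero]
    positivity

lemma nuclearNorm_sq_le (A : Matrix (Fin m) (Fin m) ℝ) :
    nuclearNorm A ^ 2 ≤ m * ∑ p : Fin m × Fin m, A p.1 p.2 ^ 2 := by
  rw [nuclearNorm, ← sum_sq_svRaw]
  simpa using sq_sum_le_card_mul_sum_sq (s := Finset.univ) (f := svRaw A)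

end SingularValues

section AllOnes

variable {n : ℕ}

lemma sum_sq_allOnes : ∑ p : Fin n × Fin n, allOnes n p.1 p.2 ^ 2 = (n : ℝ) ^ 2 := by
  simp [allOnes, sq]

lemma svRaw_allOnes_eq_zero_or_eq (j : Fin n) :
    svRaw (allOnes n) j = 0 ∨ svRaw (allOnes n) j = n := by
  have hgram : (allOnes n)ᴴ * allOnes n = (n : ℝ) • allOnes n := by
    ext; simp [allOnes, mul_apply]
  have hsq : ((allOnes n)ᴴ * allOnes n) * ((allOnes n)ᴴ * allOnes n) =
      ((n : ℝ) ^ 2) • ((allOnes n)ᴴ * allOnes n) := by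
    rw [hgram]; ext; simp [allOnes, mul_apply]; ring
  rcases eigenvalues_eq_zero_or_eq_of_mul_self_eq_smul
      (isHermitian_conjTranspose_mul_self _) hsq j with h | h
  · left; rw [svRaw, h, Real.sqrt_zero]
  · right; rw [svRaw, h, Real.sqrt_sq (Nat.cast_nonneg n)]

lemma nuclearNorm_allOnes : nuclearNorm (allOnes n) = n := by
  rcases Nat.eq_zero_or_pos n with rfl | hn
  · simp [nuclearNorm]
  -- Singular values lie in `{0, n}`, so `svRaw j ^ 2 = n * svRaw j`.
  have key : (n : ℝ) * nuclearNorm (allOnes n) = n * n := by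
    rw [nuclearNorm, Finset.mul_sum, ← sq, ← sum_sq_allOnes, ← sum_sq_svRaw]
    refine Finset.sum_congr rfl fun j _ => ?_
    rcases svRaw_allOnes_eq_zero_or_eq j with h | h <;> rw [h] <;> ring
  exact mul_left_cancel₀ (by positivity) key

lemma sval_one_allOnes (hn : 1 ≤ n) : sval (allOnes n) 1 = n := by
  have hpos : (0 : ℝ) < n := by exact_mod_cast hn
  obtain ⟨j, hj⟩ : ∃ j, svRaw (allOnes n) j = n := by
    by_contra! h
    have hzero : ∀ j, svRaw (allOnes n) j = 0 :=
      fun j => (svRaw_allOnes_eq_zero_or_eq j).resolve_right (h j)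
    have hsum : (0 : ℝ) = n ^ 2 := by simpa [hzero, sum_sq_allOnes] using sum_sq_svRaw (allOnes n)
    exact (pow_pos hpos 2).ne hsum
  refine le_antisymm ?_ (hj ▸ svRaw_le_sval_one hn _ j)
  exact (abs_le_of_sq_le_sq' (sum_sq_allOnes ▸ sval_one_sq_le_sum_sq _) hpos.le).2

end AllOnes

lemma one_le_mul_sq_of_one_div_sqrt_le {x ε : ℝ} (hx : 0 < x) (h : 1 / √x ≤ ε) :
    1 ≤ x * ε ^ 2 := by
  have h1 : 1 ≤ √x * ε := by rwa [div_le_iff₀' (Real.sqrt_pos.2 hx)] at h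
  calc 1 ≤ (√x * ε) ^ 2 := one_le_pow₀ h1
    _ = x * ε ^ 2 := by rw [mul_pow, Real.sq_sqrt hx.le]

lemma sval_one_add_mul_max_nuclearNorm_le {m : ℕ} (A : Matrix (Fin m) (Fin m) ℝ) {ε : ℝ}
    (hε : 0 < ε) (hε4 : ε < 1 / 4) (hmε : 1 ≤ m * ε ^ 2)
    (hA : ∑ p : Fin m × Fin m, A p.1 p.2 ^ 2 ≤ 1 / 16 * m / ε ^ 2) :
    sval A 1 + ε * max (m : ℝ) (nuclearNorm A) ≤ m / 2 := by
  have hm : (0 : ℝ) ≤ m := Nat.cast_nonneg m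
  have hA' : ε ^ 2 * ∑ p : Fin m × Fin m, A p.1 p.2 ^ 2 ≤ m / 16 := by
    rw [le_div_iff₀ (by positivity)] at hA
    linarith
  have hsval : sval A 1 ≤ m / 4 := by
    refine (abs_le_of_sq_le_sq' ((sval_one_sq_le_sum_sq A).trans ?_) (by positivity)).2
    nlinarith
  have hnuc : ε * nuclearNorm A ≤ m / 4 := by
    refine (abs_le_of_sq_le_sq' ?_ (by positivity)).2
    calc (ε * nuclearNorm A) ^ 2 = ε ^ 2 * nuclearNorm A ^ 2 := mul_pow _ _ _
      _ ≤ ε ^ 2 * (m * ∑ p : Fin m × Fin m, A p.1 p.2 ^ 2) := by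
        gcongr; exact nuclearNorm_sq_le A
      _ ≤ (m / 4) ^ 2 := by nlinarith
  have hmax : ε * max (m : ℝ) (nuclearNorm A) ≤ m / 4 := by
    rw [mul_max_of_nonneg _ _ hε.le]
    exact max_le (by nlinarith) hnuc
  linarith

/-- **Hard instance pair for adaptive deterministic spectral norm approximation.**
For a small set `S` of positions, no single value `σ̃` can approximate the top singular
value of both the all-ones matrix and the indicator matrix of `S` to error
`ε · max(n, ‖·‖₁)`. -/
theorem adaptive_lower_bound_hard_pair :
    ∃ c : ℝ, 0 < c ∧ ∀ n : ℕ, 1 ≤ n → ∀ ε : ℝ,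
      1 / Real.sqrt n ≤ ε → ε < 1 / 4 →
      ∀ S : Finset (Fin n × Fin n), (S.card : ℝ) ≤ c * n / ε ^ 2 →
        ¬ ∃ σ : ℝ,
          |sval (allOnes n) 1 - σ| ≤ ε * max (n : ℝ) (nuclearNorm (allOnes n)) ∧
          |sval (Matrix.of fun i j => if (i, j) ∈ S then (1 : ℝ) else 0) 1 - σ| ≤
            ε * max (n : ℝ)
              (nuclearNorm (Matrix.of fun i j => if (i, j) ∈ S then (1 : ℝ) else 0)) := by
  refine ⟨1 / 16, by norm_num, fun n hn ε hε hε4 S hS ⟨σ, hσ₁, hσS⟩ => ?_⟩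
  have hnpos : (0 : ℝ) < n := by exact_mod_cast hn
  have hεpos : 0 < ε := lt_of_lt_of_le (by positivity) hε
  have hS_small := sval_one_add_mul_max_nuclearNorm_le _ hεpos hε4
    (one_le_mul_sq_of_one_div_sqrt_le hnpos hε) ((sum_sq_indicator S).trans_le hS)
  rw [sval_one_allOnes hn, nuclearNorm_allOnes, max_self] at hσ₁
  have hεn : ε * n < n / 4 := by nlinarith
  rw [abs_le] at hσ₁ hσS
  linarith
end

section
/- Let ε ∈ (0,1), let A ∈ ℝ^{n×n} be symmetric with ‖A‖∞ ≤ 1, and let Ã ∈ ℝ^{n×n} be symmetric with ‖A − Ã‖₂ ≤ (ε/10)·max(n, ‖A‖₁). Let σ̃ > 0 satisfy (1 − ε/100)·‖Ã‖₂ ≤ σ̃ ≤ ‖Ã‖₂, and let B = I − (1/σ̃)·Ã. Then: (i) if A is positive semidefinite, ‖B‖₂ ≤ 1 + ε·max(n, ‖A‖₁)/(10σ̃); and (ii) if the smallest eigenvalue of A satisfies λ_min(A) ≤ −ε·max(n, ‖A‖₁), then ‖B‖₂ ≥ 1 + 9ε·max(n, ‖A‖₁)/(10σ̃). (This separation underlies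 deterministic PSD testing with ℓ∞-gap.) -/
/-!
Put `η = ε·max(n, ‖A‖₁)/10`. As `‖A − Ã‖₂ ≤ η`, the quadratic forms of `A` and `Ã` differ by at most
`η‖x‖²`, and `xᵀBx = ‖x‖² − xᵀÃx/σ̃`. If `A ⪰ 0`, then `−η‖x‖² ≤ xᵀÃx ≤ ‖Ã‖₂‖x‖² ≤ 2σ̃‖x‖²`
(as `ε < 1`), so `|xᵀBx| ≤ (1 + η/σ̃)‖x‖²`; this bounds `‖B‖₂` because `B` is symmetric.
If `λ_min(A) ≤ −10η`, then unit vectors `x` with `xᵀAx` close to `λ_min(A)` have `xᵀÃx ≲ −9η`,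
hence `‖B‖₂ ≥ xᵀBx ≳ 1 + 9η/σ̃`.
-/

open Matrix BigOperators

lemma ContinuousLinearMap.norm_le_of_abs_re_inner_self_le {𝕜 E : Type*} [RCLike 𝕜]
    [NormedAddCommGroup E] [InnerProductSpace 𝕜 E] {T : E →L[𝕜] E}
    (hT : (T : E →ₗ[𝕜] E).IsSymmetric) {C : ℝ} (hC : 0 ≤ C)
    (h : ∀ x, |RCLike.re (inner 𝕜 (T x) x)| ≤ C * ‖x‖ ^ 2) : ‖T‖ ≤ C := by
  rw [T.norm_eq_iSup_rayleighQuotient hT]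
  refine ciSup_le fun x => ?_
  rcases eq_or_ne x 0 with rfl | hx
  · simpa using hC
  · rw [rayleighQuotient, reApplyInnerSelf_apply, abs_div, abs_sq,
      div_le_iff₀ (by positivity)]
    exact h x

lemma dotProduct_one_sub_smul_mulVec {ι R : Type*} [Fintype ι] [DecidableEq ι] [CommRing R]
    (M : Matrix ι ι R) (c : R) (x : ι → R) :
    x ⬝ᵥ ((1 - c • M) *ᵥ x) = x ⬝ᵥ x - c * (x ⬝ᵥ (M *ᵥ x)) := by
  rw [sub_mulVec, smul_mulVec, one_mulVec, dotProduct_sub, dotProduct_smul, smul_eq_mul]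

section SpecNorm

variable {m : ℕ}

lemma specNorm_nonneg (M : Matrix (Fin m) (Fin m) ℝ) : 0 ≤ specNorm M := norm_nonneg _

lemma specNorm_of_fin_zero (M : Matrix (Fin 0) (Fin 0) ℝ) : specNorm M = 0 := by
  rw [specNorm, norm_eq_zero]
  ext _ i
  exact i.elim0

lemma inner_toEuclideanLin_toLp (M : Matrix (Fin m) (Fin m) ℝ) (x : Fin m → ℝ) :
    inner ℝ (toEuclideanLin M (WithLp.toLp 2 x)) (WithLp.toLp 2 x) = x ⬝ᵥ (M *ᵥ x) := by
  simp [EuclideanSpace.inner_toLp_toLp]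

lemma norm_toLp_sq (x : Fin m → ℝ) :
    ‖(WithLp.toLp 2 x : EuclideanSpace ℝ (Fin m))‖ ^ 2 = x ⬝ᵥ x := by
  rw [← real_inner_self_eq_norm_sq, EuclideanSpace.inner_toLp_toLp, star_trivial]

lemma abs_dotProduct_mulVec_le_specNorm (M : Matrix (Fin m) (Fin m) ℝ) (x : Fin m → ℝ) :
    |x ⬝ᵥ (M *ᵥ x)| ≤ specNorm M * (x ⬝ᵥ x) := by
  set v : EuclideanSpace ℝ (Fin m) := WithLp.toLp 2 x
  calc |x ⬝ᵥ (M *ᵥ x)| = |inner ℝ (toEuclideanLin M v) v| := by rw [inner_toEuclideanLin_toLp]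
    _ ≤ ‖toEuclideanLin M v‖ * ‖v‖ := abs_real_inner_le_norm _ _
    _ ≤ specNorm M * ‖v‖ * ‖v‖ := by
      gcongr
      exact (LinearMap.toContinuousLinearMap (toEuclideanLin M)).le_opNorm v
    _ = specNorm M * (x ⬝ᵥ x) := by rw [mul_assoc, ← sq, norm_toLp_sq]

lemma specNorm_le_of_abs_dotProduct_mulVec_le {M : Matrix (Fin m) (Fin m) ℝ} (hM : M.IsSymm)
    {C : ℝ} (hC : 0 ≤ C) (h : ∀ x, |x ⬝ᵥ (M *ᵥ x)| ≤ C * (x ⬝ᵥ x)) : specNorm M ≤ C := by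
  refine ContinuousLinearMap.norm_le_of_abs_re_inner_self_le
    (isSymmetric_toEuclideanLin_iff.mpr (isHermitian_iff_isSymm.mpr hM)) hC fun v => ?_
  obtain ⟨x, rfl⟩ := WithLp.toLp_surjective 2 v
  rw [RCLike.re_to_real, LinearMap.coe_toContinuousLinearMap', inner_toEuclideanLin_toLp,
    norm_toLp_sq]
  exact h x

lemma vnorm_eq_sqrt_dotProduct (x : Fin m → ℝ) : vnorm x = √(x ⬝ᵥ x) := by
  simp [vnorm, dotProduct, sq]

lemma le_lamMin {A : Matrix (Fin m) (Fin m) ℝ} (hm : 0 < m) {a : ℝ}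
    (h : ∀ x, x ⬝ᵥ x = 1 → a ≤ x ⬝ᵥ (A *ᵥ x)) : a ≤ lamMin A := by
  refine le_csInf ⟨_, Pi.single ⟨0, hm⟩ 1, ?_, rfl⟩ ?_
  · rw [vnorm_eq_sqrt_dotProduct, dotProduct_single, Pi.single_eq_same, mul_one, Real.sqrt_one]
  · rintro _ ⟨x, hx, rfl⟩
    rw [vnorm_eq_sqrt_dotProduct, Real.sqrt_eq_one] at hx
    exact h x hx

lemma abs_dotProduct_mulVec_sub_le {A Ã : Matrix (Fin m) (Fin m) ℝ} {η : ℝ}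
    (h : specNorm (A - Ã) ≤ η) (x : Fin m → ℝ) :
    |x ⬝ᵥ (A *ᵥ x) - x ⬝ᵥ (Ã *ᵥ x)| ≤ η * (x ⬝ᵥ x) := by
  rw [← dotProduct_sub, ← sub_mulVec]
  exact (abs_dotProduct_mulVec_le_specNorm _ x).trans
    (mul_le_mul_of_nonneg_right h (norm_toLp_sq x ▸ sq_nonneg _))

theorem specNorm_one_sub_inv_smul_le_of_posSemidef {A Ã : Matrix (Fin m) (Fin m) ℝ}
    (hA : A.PosSemidef) (hÃ : Ã.IsSymm) {σ η : ℝ} (hσ : 0 < σ) (hη : 0 ≤ η)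
    (hclose : specNorm (A - Ã) ≤ η) (hÃσ : specNorm Ã ≤ 2 * σ) :
    specNorm (1 - σ⁻¹ • Ã) ≤ 1 + η / σ := by
  refine specNorm_le_of_abs_dotProduct_mulVec_le (isSymm_one.sub (hÃ.smul _)) (by positivity)
    fun x => ?_
  have hs : 0 ≤ x ⬝ᵥ x := norm_toLp_sq x ▸ sq_nonneg _
  have hpsd : 0 ≤ x ⬝ᵥ (A *ᵥ x) := by simpa using hA.dotProduct_mulVec_nonneg x
  have hlo : -(η * (x ⬝ᵥ x)) ≤ x ⬝ᵥ (Ã *ᵥ x) := by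
    linarith [(abs_le.mp (abs_dotProduct_mulVec_sub_le hclose x)).2]
  have hhi : x ⬝ᵥ (Ã *ᵥ x) ≤ 2 * σ * (x ⬝ᵥ x) :=
    (le_abs_self _).trans ((abs_dotProduct_mulVec_le_specNorm Ã x).trans (by gcongr))
  have hlo' : -(η / σ * (x ⬝ᵥ x)) ≤ σ⁻¹ * (x ⬝ᵥ (Ã *ᵥ x)) := by
    rw [div_mul_eq_mul_div, ← neg_div, div_eq_inv_mul]
    exact mul_le_mul_of_nonneg_left hlo (inv_nonneg.mpr hσ.le)
  have hhi' : σ⁻¹ * (x ⬝ᵥ (Ã *ᵥ x)) ≤ 2 * (x ⬝ᵥ x) := by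
    rw [inv_mul_le_iff₀ hσ]
    linarith
  rw [dotProduct_one_sub_smul_mulVec, abs_le]
  constructor <;> nlinarith [mul_nonneg (div_nonneg hη hσ.le) hs]

theorem le_specNorm_one_sub_inv_smul_of_lamMin_le {A Ã : Matrix (Fin m) (Fin m) ℝ} (hm : 0 < m)
    {σ η μ : ℝ} (hσ : 0 < σ) (hclose : specNorm (A - Ã) ≤ η) (hlam : lamMin A ≤ -μ) :
    1 + (μ - η) / σ ≤ specNorm (1 - σ⁻¹ • Ã) := by
  set b := specNorm (1 - σ⁻¹ • Ã)
  have hinf : (1 - b) * σ - η ≤ lamMin A := le_lamMin hm fun x hx => by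
    have hB := (abs_le.mp (abs_dotProduct_mulVec_le_specNorm (1 - σ⁻¹ • Ã) x)).2
    have hq := (abs_le.mp (abs_dotProduct_mulVec_sub_le hclose x)).1
    rw [dotProduct_one_sub_smul_mulVec, hx] at hB
    rw [hx] at hq
    have : (1 - b) * σ ≤ x ⬝ᵥ (Ã *ᵥ x) := (le_div_iff₀ hσ).mp (by rw [div_eq_inv_mul]; linarith)
    linarith
  have : (μ - η) / σ ≤ b - 1 := (div_le_iff₀ hσ).mpr (by linarith)
  linarith

end SpecNorm

theorem psd_testing_separation_general
    (n : ℕ) (ε : ℝ) (hε : ε ∈ Set.Ioo (0 : ℝ) 1)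
    (A Atil : Matrix (Fin n) (Fin n) ℝ) (hAtil : Atil.IsSymm)
    (hclose : specNorm (A - Atil) ≤ ε / 10 * max (n : ℝ) (nuclearNorm A))
    (σt : ℝ) (hσpos : 0 < σt)
    (hσlo : (1 - ε / 100) * specNorm Atil ≤ σt) (hσhi : σt ≤ specNorm Atil) :
    (A.PosSemidef →
      specNorm (1 - σt⁻¹ • Atil) ≤ 1 + ε * max (n : ℝ) (nuclearNorm A) / (10 * σt)) ∧
    (lamMin A ≤ -(ε * max (n : ℝ) (nuclearNorm A)) →
      1 + 9 * ε * max (n : ℝ) (nuclearNorm A) / (10 * σt) ≤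
        specNorm (1 - σt⁻¹ • Atil)) := by
  obtain ⟨hε0, hε1⟩ := hε
  set M := max (n : ℝ) (nuclearNorm A)
  have hM : 0 ≤ M := (Nat.cast_nonneg n).trans (le_max_left _ _)
  refine ⟨fun hPSD => ?_, fun hlam => ?_⟩
  · have hAtil_le : specNorm Atil ≤ 2 * σt := by nlinarith [specNorm_nonneg Atil]
    calc specNorm (1 - σt⁻¹ • Atil) ≤ 1 + ε / 10 * M / σt :=
          specNorm_one_sub_inv_smul_le_of_posSemidef hPSD hAtil hσpos (by positivity) hclose
            hAtil_le
      _ = 1 + ε * M / (10 * σt) := by ring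
  · have hn : 0 < n := Nat.pos_of_ne_zero fun h => by
      subst h
      linarith [specNorm_of_fin_zero Atil]
    calc 1 + 9 * ε * M / (10 * σt) = 1 + (ε * M - ε / 10 * M) / σt := by ring
      _ ≤ specNorm (1 - σt⁻¹ • Atil) :=
          le_specNorm_one_sub_inv_smul_of_lamMin_le hn hσpos hclose hlam

/-- **Separation underlying deterministic PSD testing with ℓ∞-gap.** Let `Ã` approximate
the symmetric bounded-entry matrix `A` to spectral error `(ε/10)·max(n,‖A‖₁)`, let
`(1 − ε/100)‖Ã‖₂ ≤ σ̃ ≤ ‖Ã‖₂` with `σ̃ > 0`, and let `B = I − Ã/σ̃`. If `A` is PSD then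
`‖B‖₂ ≤ 1 + ε·max(n,‖A‖₁)/(10σ̃)`; if `λ_min(A) ≤ −ε·max(n,‖A‖₁)` then
`‖B‖₂ ≥ 1 + 9ε·max(n,‖A‖₁)/(10σ̃)`. -/
theorem psd_testing_separation
    (n : ℕ) (ε : ℝ) (hε : ε ∈ Set.Ioo (0 : ℝ) 1)
    (A Atil : Matrix (Fin n) (Fin n) ℝ) (hA : A.IsSymm) (hAtil : Atil.IsSymm)
    (hbd : ∀ i j, |A i j| ≤ 1)
    (hclose : specNorm (A - Atil) ≤ ε / 10 * max (n : ℝ) (nuclearNorm A))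
    (σt : ℝ) (hσpos : 0 < σt)
    (hσlo : (1 - ε / 100) * specNorm Atil ≤ σt) (hσhi : σt ≤ specNorm Atil) :
    (A.PosSemidef →
      specNorm (1 - σt⁻¹ • Atil) ≤ 1 + ε * max (n : ℝ) (nuclearNorm A) / (10 * σt)) ∧
    (lamMin A ≤ -(ε * max (n : ℝ) (nuclearNorm A)) →
      1 + 9 * ε * max (n : ℝ) (nuclearNorm A) / (10 * σt) ≤
        specNorm (1 - σt⁻¹ • Atil)) :=
  psd_testing_separation_general n ε hε A Atil hAtil hclose σt hσpos hσlo hσhi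
end
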